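/- Let ε ∈ [0,1] and ρ ∈ [0,1], let (X₁,Y₁) ~ P_{ε,ρ}, and let X₂ and Y₃ be standard normal random variables such that (X₁,Y₁), X₂, Y₃ are mutually independent. Then P(X₁ > X₂ and Y₁ > Y₃) = (1−ε)·(1/4) + ε·(1/4 + arcsin(ρ/2)/(2π)). -/

import Mathlib

/-!
Write `q(r) = 1/4 + arcsin r / (2π)`. If `(X₁, Y₁) ~ N(0, Σ_ρ)` and `(X₂, Y₃) ~ N(0, Σ_ρ')` are
independent, comparing characteristic functions shows that `((X₁ - X₂)/√2, (Y₁ - Y₃)/√2)` is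
`N(0, Σ_{(ρ+ρ')/2})`; the event `X₂ < X₁, Y₃ < Y₁` is the positive quadrant for this pair.
A vector `N(0, Σ_r)` is `(Z₁, sin α Z₁ + cos α Z₂)` with `α = arcsin r`, so the quadrant is a
wedge of opening `π/2 + α` for the radially symmetric law of `(Z₁, Z₂)`, and polar coordinates
give it mass `(π/2 + α)/(2π) = q(r)`. The mixture contributes `q(0) = 1/4` and `q(ρ/2)` with
weights `1 - ε` and `ε`.
-/

open MeasureTheory ProbabilityTheory Real Filter Topology

noncomputable section

def stdGauss : Measure ℝ := gaussianReal 0 1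

def stdGauss2 : Measure (ℝ × ℝ) := stdGauss.prod stdGauss

/-- `N(0, Σ_ρ)` -/
def biNormal (ρ : ℝ) : Measure (ℝ × ℝ) :=
  stdGauss2.map fun z => (z.1, ρ * z.1 + Real.sqrt (1 - ρ ^ 2) * z.2)

/-- `P_{ε,ρ}` -/
def mixture (ε ρ : ℝ) : Measure (ℝ × ℝ) :=
  ENNReal.ofReal (1 - ε) • biNormal 0 + ENNReal.ofReal ε • biNormal ρ

def iid (n : ℕ) (μ : Measure (ℝ × ℝ)) : Measure (Fin n → ℝ × ℝ) :=
  Measure.pi fun _ => μ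

instance : IsProbabilityMeasure stdGauss := by unfold stdGauss; infer_instance

instance : IsProbabilityMeasure stdGauss2 := by unfold stdGauss2; infer_instance

lemma charFunDual_stdGauss (L : StrongDual ℝ ℝ) :
    charFunDual stdGauss L = Complex.exp (-(L 1 ^ 2 / 2 : ℝ)) := by
  rw [charFunDual_eq_charFun_map_one, stdGauss, gaussianReal_map_continuousLinearMap,
    charFun_gaussianReal]
  simp [Real.coe_toNNReal _ (sq_nonneg _)]

lemma charFunDual_stdGauss2 (L : StrongDual ℝ (ℝ × ℝ)) :
    charFunDual stdGauss2 L = Complex.exp (-((L (1, 0) ^ 2 + L (0, 1) ^ 2) / 2 : ℝ)) := by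
  rw [stdGauss2, charFunDual_prod, charFunDual_stdGauss, charFunDual_stdGauss, ← Complex.exp_add]
  congr 1
  simp
  ring

lemma strongDual_prod_apply (L : StrongDual ℝ (ℝ × ℝ)) (x y : ℝ) :
    L (x, y) = x * L (1, 0) + y * L (0, 1) := by
  rw [show ((x, y) : ℝ × ℝ) = x • (1, 0) + y • (0, 1) by simp, map_add, map_smul, map_smul,
    smul_eq_mul, smul_eq_mul]

lemma charFunDual_biNormal {ρ : ℝ} (hρ : ρ ∈ Set.Icc (-1 : ℝ) 1) (L : StrongDual ℝ (ℝ × ℝ)) :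
    charFunDual (biNormal ρ) L =
      Complex.exp (-((L (1, 0) ^ 2 + 2 * ρ * L (1, 0) * L (0, 1) + L (0, 1) ^ 2) / 2 : ℝ)) := by
  let A : ℝ × ℝ →L[ℝ] ℝ × ℝ := (ContinuousLinearMap.fst ℝ ℝ ℝ).prod
    (ρ • ContinuousLinearMap.fst ℝ ℝ ℝ + √(1 - ρ ^ 2) • ContinuousLinearMap.snd ℝ ℝ ℝ)
  have hA : biNormal ρ = stdGauss2.map A := rfl
  have hs : √(1 - ρ ^ 2) ^ 2 = 1 - ρ ^ 2 := Real.sq_sqrt (by nlinarith [hρ.1, hρ.2])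
  rw [hA, charFunDual_map, charFunDual_stdGauss2]
  congr 3
  simp only [A, ContinuousLinearMap.comp_apply, ContinuousLinearMap.prod_apply]
  simp [strongDual_prod_apply L 1 ρ, strongDual_prod_apply L 0 (√(1 - ρ ^ 2))]
  linear_combination (L (0, 1)) ^ 2 * hs

instance (ρ : ℝ) : IsProbabilityMeasure (biNormal ρ) := by
  unfold biNormal; exact Measure.isProbabilityMeasure_map (by fun_prop)

lemma map_inv_sqrt_two_smul_sub_biNormal_prod {ρ ρ' : ℝ} (hρ : ρ ∈ Set.Icc (-1 : ℝ) 1)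
    (hρ' : ρ' ∈ Set.Icc (-1 : ℝ) 1) :
    ((biNormal ρ).prod (biNormal ρ')).map (fun w => (√2)⁻¹ • (w.1 - w.2))
      = biNormal ((ρ + ρ') / 2) := by
  let D : (ℝ × ℝ) × (ℝ × ℝ) →L[ℝ] ℝ × ℝ :=
    (√2)⁻¹ • (ContinuousLinearMap.fst ℝ _ _ - ContinuousLinearMap.snd ℝ _ _)
  have hD : (fun w : (ℝ × ℝ) × (ℝ × ℝ) => (√2)⁻¹ • (w.1 - w.2)) = D := rfl
  have hmean : (ρ + ρ') / 2 ∈ Set.Icc (-1 : ℝ) 1 :=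
    ⟨by linarith [hρ.1, hρ'.1], by linarith [hρ.2, hρ'.2]⟩
  refine Measure.ext_of_charFunDual (funext fun L => ?_)
  rw [hD, charFunDual_map, charFunDual_prod, charFunDual_biNormal hρ, charFunDual_biNormal hρ',
    charFunDual_biNormal hmean, ← Complex.exp_add]
  congr 1
  have h2 : ((√2 : ℝ) : ℂ)⁻¹ ^ 2 = 1 / 2 := by
    rw [inv_pow, ← Complex.ofReal_pow, Real.sq_sqrt zero_le_two]; norm_num
  simp [D]
  linear_combination -(L (1, 0) ^ 2 + (ρ + ρ') * L (1, 0) * L (0, 1) + L (0, 1) ^ 2 : ℂ) * h2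

lemma stdGauss2_eq_withDensity :
    stdGauss2 = volume.withDensity
      (fun p => ENNReal.ofReal (gaussianPDFReal 0 1 p.1 * gaussianPDFReal 0 1 p.2)) := by
  rw [stdGauss2, stdGauss, gaussianReal_of_var_ne_zero 0 one_ne_zero,
    prod_withDensity (measurable_gaussianPDF 0 1) (measurable_gaussianPDF 0 1),
    Measure.volume_eq_prod]
  simp_rw [gaussianPDF, ENNReal.ofReal_mul (gaussianPDFReal_nonneg 0 1 _)]

lemma gaussianPDFReal_mul_polarCoord_symm (p : ℝ × ℝ) :
    gaussianPDFReal 0 1 (polarCoord.symm p).1 * gaussianPDFReal 0 1 (polarCoord.symm p).2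
      = exp (-p.1 ^ 2 / 2) / (2 * π) := by
  have h2π : √(2 * π) * √(2 * π) = 2 * π := Real.mul_self_sqrt (by positivity)
  simp only [polarCoord_symm_apply, gaussianPDFReal, NNReal.coe_one, mul_one, sub_zero]
  rw [mul_mul_mul_comm, ← Real.exp_add, ← mul_inv, h2π, mul_comm, ← div_eq_mul_inv]
  congr 2
  linear_combination (-p.1 ^ 2 / 2) * Real.sin_sq_add_cos_sq p.2

def wedge (α : ℝ) : Set (ℝ × ℝ) := {x | 0 < x.1 ∧ 0 < sin α * x.1 + cos α * x.2}

lemma polarCoord_symm_mem_wedge_iff {α : ℝ} (hα : α ∈ Set.Icc (-(π / 2)) (π / 2)) {p : ℝ × ℝ}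
    (hp : p ∈ polarCoord.target) :
    polarCoord.symm p ∈ wedge α ↔ p.2 ∈ Set.Ioo (-α) (π / 2) := by
  obtain ⟨hR, hθ⟩ : 0 < p.1 ∧ p.2 ∈ Set.Ioo (-π) π := by simpa [polarCoord_target] using hp
  have hsin : sin α * (p.1 * cos p.2) + cos α * (p.1 * sin p.2) = p.1 * sin (α + p.2) := by
    rw [sin_add]; ring
  simp only [wedge, polarCoord_symm_apply, Set.mem_ofPred_eq, hsin, mul_pos_iff_of_pos_left hR,
    Set.mem_Ioo]
  constructor
  · rintro ⟨hcos, hsin⟩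
    have hlt : p.2 < π / 2 := by
      by_contra! h
      linarith [cos_nonpos_of_pi_div_two_le_of_le h (by linarith [hθ.2])]
    have hgt : -(π / 2) < p.2 := by
      by_contra! h
      have := cos_nonpos_of_pi_div_two_le_of_le (x := -p.2) (by linarith) (by linarith [hθ.1])
      rw [cos_neg] at this
      linarith
    refine ⟨?_, hlt⟩
    by_contra! h
    linarith [sin_nonpos_of_nonpos_of_neg_pi_le (x := α + p.2) (by linarith)
      (by linarith [hα.1])]
  · rintro ⟨h1, h2⟩
    exact ⟨cos_pos_of_mem_Ioo ⟨by linarith [hα.2], h2⟩,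
      sin_pos_of_pos_of_lt_pi (by linarith) (by linarith [hα.2])⟩

lemma integral_Ioi_mul_exp_neg_sq_div_two : ∫ x in Set.Ioi (0 : ℝ), x * exp (-x ^ 2 / 2) = 1 := by
  have h := integral_mul_cexp_neg_mul_sq (b := 1 / 2) (by norm_num)
  have hc : ∀ x : ℝ, (x : ℂ) * Complex.exp (-(1 / 2) * (x : ℂ) ^ 2)
      = ((x * exp (-x ^ 2 / 2) : ℝ) : ℂ) := by
    intro x; push_cast; ring_nf
  simp_rw [hc, integral_complex_ofReal] at h
  norm_num at h
  exact_mod_cast h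

lemma stdGauss2_wedge {α : ℝ} (hα : α ∈ Set.Icc (-(π / 2)) (π / 2)) :
    stdGauss2 (wedge α) = ENNReal.ofReal (1 / 4 + α / (2 * π)) := by
  set φ : ℝ × ℝ → ℝ := fun p => gaussianPDFReal 0 1 p.1 * gaussianPDFReal 0 1 p.2
  set box : Set (ℝ × ℝ) := Set.Ioi 0 ×ˢ Set.Ioo (-α) (π / 2)
  have hφ : Integrable φ := by
    rw [Measure.volume_eq_prod]
    exact (integrable_gaussianPDFReal 0 1).mul_prod (integrable_gaussianPDFReal 0 1)
  have hW : MeasurableSet (wedge α) :=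
    (measurableSet_lt measurable_const measurable_fst).inter
      (measurableSet_lt measurable_const (by fun_prop : Measurable fun x : ℝ × ℝ =>
        sin α * x.1 + cos α * x.2))
  have hbox : box ⊆ polarCoord.target := by
    rw [polarCoord_target]
    exact Set.prod_mono subset_rfl
      (Set.Ioo_subset_Ioo (by linarith [hα.2, pi_pos]) (by linarith [pi_pos]))
  have key : ∀ p ∈ polarCoord.target, p.1 • (wedge α).indicator φ (polarCoord.symm p)
      = box.indicator (fun q => q.1 * exp (-q.1 ^ 2 / 2) * (2 * π)⁻¹) p := by
    intro p hp
    have hR : 0 < p.1 := hp.1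
    by_cases hθ : p.2 ∈ Set.Ioo (-α) (π / 2)
    · rw [Set.indicator_of_mem ((polarCoord_symm_mem_wedge_iff hα hp).2 hθ),
        Set.indicator_of_mem (show p ∈ box from ⟨hR, hθ⟩), smul_eq_mul,
        show φ _ = _ from gaussianPDFReal_mul_polarCoord_symm p]
      ring
    · rw [Set.indicator_of_notMem (mt (polarCoord_symm_mem_wedge_iff hα hp).1 hθ),
        Set.indicator_of_notMem (fun h => hθ h.2), smul_zero]
  rw [stdGauss2_eq_withDensity, withDensity_apply _ hW,
    ← ofReal_integral_eq_lintegral_ofReal hφ.integrableOn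
      (ae_of_all _ fun p => mul_nonneg (gaussianPDFReal_nonneg 0 1 _) (gaussianPDFReal_nonneg 0 1 _))]
  congr 1
  calc ∫ p in wedge α, φ p
      = ∫ p in polarCoord.target, p.1 • (wedge α).indicator φ (polarCoord.symm p) := by
        rw [integral_comp_polarCoord_symm, integral_indicator hW]
    _ = ∫ p in box, p.1 * exp (-p.1 ^ 2 / 2) * (2 * π)⁻¹ := by
        rw [setIntegral_congr_fun polarCoord.open_target.measurableSet key,
          setIntegral_indicator (measurableSet_Ioi.prod measurableSet_Ioo),
          Set.inter_eq_self_of_subset_right hbox]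
    _ = (∫ R in Set.Ioi 0, R * exp (-R ^ 2 / 2)) * ∫ _ in Set.Ioo (-α) (π / 2), (2 * π)⁻¹ := by
        rw [Measure.volume_eq_prod]
        exact setIntegral_prod_mul (fun R => R * exp (-R ^ 2 / 2)) (fun _ => (2 * π)⁻¹) _ _
    _ = 1 / 4 + α / (2 * π) := by
        rw [integral_Ioi_mul_exp_neg_sq_div_two, setIntegral_const,
          Real.volume_real_Ioo_of_le (by linarith [hα.1]), smul_eq_mul]
        field_simp
        ring

lemma biNormal_zero : biNormal 0 = stdGauss2 := by
  simp [biNormal]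

lemma biNormal_quadrant {r : ℝ} (hr : r ∈ Set.Icc (-1 : ℝ) 1) :
    biNormal r (Set.Ioi 0 ×ˢ Set.Ioi 0) = ENNReal.ofReal (1 / 4 + arcsin r / (2 * π)) := by
  have hpre : (fun z : ℝ × ℝ => (z.1, r * z.1 + √(1 - r ^ 2) * z.2)) ⁻¹' (Set.Ioi 0 ×ˢ Set.Ioi 0)
      = wedge (arcsin r) := by
    ext z
    simp [wedge, sin_arcsin hr.1 hr.2, cos_arcsin]
  rw [biNormal, Measure.map_apply (by fun_prop) (measurableSet_Ioi.prod measurableSet_Ioi), hpre,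
    stdGauss2_wedge ⟨neg_pi_div_two_le_arcsin r, arcsin_le_pi_div_two r⟩]

lemma biNormal_prod_biNormal_setOf_lt_and_lt {ρ ρ' : ℝ} (hρ : ρ ∈ Set.Icc (-1 : ℝ) 1)
    (hρ' : ρ' ∈ Set.Icc (-1 : ℝ) 1) :
    ((biNormal ρ).prod (biNormal ρ')) {w | w.2.1 < w.1.1 ∧ w.2.2 < w.1.2}
      = ENNReal.ofReal (1 / 4 + arcsin ((ρ + ρ') / 2) / (2 * π)) := by
  have hpre : {w : (ℝ × ℝ) × ℝ × ℝ | w.2.1 < w.1.1 ∧ w.2.2 < w.1.2}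
      = (fun w => (√2)⁻¹ • (w.1 - w.2)) ⁻¹' (Set.Ioi 0 ×ˢ Set.Ioi 0) := by
    ext w
    simp [sub_pos]
  rw [hpre, ← Measure.map_apply (by fun_prop) (measurableSet_Ioi.prod measurableSet_Ioi),
    map_inv_sqrt_two_smul_sub_biNormal_prod hρ hρ',
    biNormal_quadrant ⟨by linarith [hρ.1, hρ'.1], by linarith [hρ.2, hρ'.2]⟩]

/-- `(X₁, Y₁)` is the first and `(X₂, Y₃)` the second factor of the product measure. -/
theorem spearman_kernel (ε ρ : ℝ) (hε : ε ∈ Set.Icc (0 : ℝ) 1) (hρ : ρ ∈ Set.Icc (0 : ℝ) 1) :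
    (((mixture ε ρ).prod (stdGauss.prod stdGauss))
        {w : (ℝ × ℝ) × ℝ × ℝ | w.2.1 < w.1.1 ∧ w.2.2 < w.1.2}).toReal
      = (1 - ε) * (1 / 4) + ε * (1 / 4 + Real.arcsin (ρ / 2) / (2 * π)) := by
  obtain ⟨hε0, hε1⟩ := hε
  have hzero : (0 : ℝ) ∈ Set.Icc (-1 : ℝ) 1 := by norm_num
  have hcontam := biNormal_prod_biNormal_setOf_lt_and_lt ⟨by linarith [hρ.1], hρ.2⟩ hzero
  have hnull := biNormal_prod_biNormal_setOf_lt_and_lt hzero hzero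
  have hpos : 0 ≤ arcsin (ρ / 2) := arcsin_nonneg.2 (div_nonneg hρ.1 zero_le_two)
  rw [add_zero] at hcontam hnull
  rw [zero_div, arcsin_zero, zero_div, add_zero] at hnull
  rw [← stdGauss2, ← biNormal_zero, mixture, Measure.add_prod, Measure.prod_smul_left,
    Measure.prod_smul_left, Measure.add_apply, Measure.smul_apply, Measure.smul_apply, hnull,
    hcontam, smul_eq_mul, smul_eq_mul, ← ENNReal.ofReal_mul (by linarith),
    ← ENNReal.ofReal_mul hε0, ← ENNReal.ofReal_add (by positivity) (by positivity),
    ENNReal.toReal_ofReal (by positivity)]
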